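/- arXiv:2503.18668 — 5 statements merged into one kernel-verified Lean document; each statement's English description precedes it below -/
import Mathlib

section
/- Let C be a convex subset of V and let u, v be adjacent extreme points of C with f u > b and f v < b. Set θ = (b − f v)/(f u − f v) and w = θ • u + (1 − θ) • v. Then θ ∈ (0, 1), f w = b, w is an extreme point of C ∩ H, and u and w are adjacent extreme points of C ∩ H. -/
/-- Let `C` be convex and `u, v` adjacent extreme points of `C` with
`f u > b` and `f v < b`.  Set `θ = (b − f v)/(f u − f v)` and `w = θ • u + (1 − θ) • v`.
Then `θ ∈ (0, 1)`, `f w = b`, `w` is an extreme point of `C ∩ H`, and `u` and `w` are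
adjacent extreme points of `C ∩ H`, where `H = {x | f x ≥ b}`. -/
theorem new_extremePoint_of_cut_edge
    {V : Type*} [AddCommGroup V] [Module ℝ V]
    (f : V →ₗ[ℝ] ℝ) (b : ℝ) (C : Set V) (hC : Convex ℝ C) {u v : V}
    (hu : u ∈ Set.extremePoints ℝ C) (hv : v ∈ Set.extremePoints ℝ C)
    (huv : u ≠ v) (hadj : IsExtreme ℝ C (segment ℝ u v))
    (hub : b < f u) (hvb : f v < b)
    (θ : ℝ) (hθ : θ = (b - f v) / (f u - f v))
    (w : V) (hw : w = θ • u + (1 - θ) • v) :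
    θ ∈ Set.Ioo (0 : ℝ) 1 ∧ f w = b ∧
    w ∈ Set.extremePoints ℝ (C ∩ {x | b ≤ f x}) ∧
    (u ≠ w ∧ u ∈ Set.extremePoints ℝ (C ∩ {x | b ≤ f x}) ∧
      w ∈ Set.extremePoints ℝ (C ∩ {x | b ≤ f x}) ∧
      IsExtreme ℝ (C ∩ {x | b ≤ f x}) (segment ℝ u w)) := by
  have hd : 0 < f u - f v := by linarith
  have hθ0 : 0 < θ := by rw [hθ]; exact div_pos (by linarith) hd
  have hθ1 : θ < 1 := by rw [hθ, div_lt_one hd]; linarith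
  have hθmul : θ * (f u - f v) = b - f v := by
    rw [hθ]; field_simp
  have h1θ : (1 : ℝ) - θ ≠ 0 := by linarith
  have hfw : f w = b := by
    rw [hw]; simp only [map_add, map_smul, smul_eq_mul]; nlinarith
  have hwseg : w ∈ segment ℝ u v :=
    ⟨θ, 1 - θ, le_of_lt hθ0, by linarith, by ring, hw.symm⟩
  have hwC : w ∈ C := hadj.1 hwseg
  -- unique point with f = b on the segment
  have uniq : ∀ x ∈ segment ℝ u v, f x = b → x = w := by
    rintro x ⟨s, t, hs, ht, hst, rfl⟩ hfx
    have hfx' : s * f u + t * f v = b := by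
      simpa only [map_add, map_smul, smul_eq_mul] using hfx
    have hs' : s = θ := by
      have h1 : s * (f u - f v) = θ * (f u - f v) := by
        rw [hθmul]; linear_combination hfx' - f v * hst
      exact mul_right_cancel₀ (ne_of_gt hd) h1
    have ht' : t = 1 - θ := by linarith
    rw [hs', ht', hw]
  -- segment part of H maps into segment u w
  have subW : ∀ x ∈ segment ℝ u v, b ≤ f x → x ∈ segment ℝ u w := by
    rintro x ⟨s, t, hs, ht, hst, rfl⟩ hfx
    have hfx' : b ≤ s * f u + t * f v := by
      simpa only [map_add, map_smul, smul_eq_mul] using hfx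
    have hsθ : θ ≤ s := by
      have key : s * (f u - f v) = s * f u + t * f v - f v := by
        linear_combination (-(f v)) * hst
      have h1 : θ * (f u - f v) ≤ s * (f u - f v) := by
        rw [hθmul, key]; linarith
      exact le_of_mul_le_mul_right h1 hd
    have h1θ' : (0:ℝ) < 1 - θ := by linarith
    refine ⟨(s - θ) / (1 - θ), t / (1 - θ), div_nonneg (by linarith) h1θ'.le,
      div_nonneg ht h1θ'.le, ?_, ?_⟩
    · field_simp; linarith
    · have e1 : (s - θ) / (1 - θ) + t / (1 - θ) * θ = s := by
        field_simp; linear_combination θ * hst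
      have e2 : t / (1 - θ) * (1 - θ) = t := div_mul_cancel₀ t h1θ
      rw [hw, smul_add, smul_smul, smul_smul, ← add_assoc, ← add_smul, e1, e2]
  have ext_sub : ∀ x ∈ Set.extremePoints ℝ C, x ∈ C ∩ {x | b ≤ f x} →
      x ∈ Set.extremePoints ℝ (C ∩ {x | b ≤ f x}) := by
    intro x hx hxA
    exact ⟨hxA, fun x1 h1 x2 h2 hseg => hx.2 h1.1 h2.1 hseg⟩
  have hsub_uw : segment ℝ u w ⊆ segment ℝ u v :=
    (convex_segment u v).segment_subset (left_mem_segment ℝ u v) hwseg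
  have huwH : ∀ x ∈ segment ℝ u w, b ≤ f x := by
    rintro x ⟨s, t, hs, ht, hst, rfl⟩
    simp only [map_add, map_smul, smul_eq_mul]
    rw [hfw]
    have hsb : s * b + t * b = b := by linear_combination b * hst
    linarith [mul_le_mul_of_nonneg_left hub.le hs]
  have hwext : w ∈ Set.extremePoints ℝ (C ∩ {x | b ≤ f x}) := by
    refine ⟨⟨hwC, le_of_eq hfw.symm⟩, fun x1 h1 x2 h2 hseg => ?_⟩
    obtain ⟨hseg1, hseg2⟩ := And.intro (hadj.left_mem_of_mem_openSegment h1.1 h2.1 hwseg hseg)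
      (hadj.right_mem_of_mem_openSegment h1.1 h2.1 hwseg hseg)
    obtain ⟨a, c, ha, hc, hac, hsum⟩ := hseg
    have hfsum : a * f x1 + c * f x2 = b := by
      have := congrArg f hsum
      simpa only [map_add, map_smul, smul_eq_mul, hfw] using this
    have hb1 : b ≤ f x1 := h1.2
    have hb2 : b ≤ f x2 := h2.2
    have h1' : a * b ≤ a * f x1 := mul_le_mul_of_nonneg_left hb1 ha.le
    have h2' : c * b ≤ c * f x2 := mul_le_mul_of_nonneg_left hb2 hc.le
    have hbb : a * b + c * b = b := by linear_combination b * hac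
    have hf1 : f x1 = b := mul_left_cancel₀ (ne_of_gt ha) (by linarith)
    have hf2 : f x2 = b := mul_left_cancel₀ (ne_of_gt hc) (by linarith)
    exact uniq x1 hseg1 hf1
  refine ⟨⟨hθ0, hθ1⟩, hfw, hwext, ?_, ext_sub u hu ⟨hu.1, le_of_lt hub⟩, hwext, ?_, ?_⟩
  · intro h
    have : f u = b := by rw [h, hfw]
    linarith
  · intro x hx
    exact ⟨hadj.1 (hsub_uw hx), huwH x hx⟩
  · rintro x1 h1 x2 h2 x hx hseg
    obtain hseg1 := hadj.left_mem_of_mem_openSegment h1.1 h2.1 (hsub_uw hx) hseg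
    exact subW x1 hseg1 h1.2
end

section
/- Let C be a convex subset of V and let σw, σu, σv be affinely independent extreme points of C such that the triangle T = convexHull ℝ {σw, σu, σv} is an extreme subset of C and each of the three segments [σw, σu], [σw, σv], [σu, σv] is an extreme subset of C (so each pair is adjacent in C). Suppose f σw > b, f σu < b, and f σv < b. Let p = θ₁ • σw + (1 − θ₁) • σu with θ₁ = (b − f σu)/(f σw − f σu), and q = θ₂ • σw + (1 − θ₂) • σv with θ₂ = (b − f σv)/(f σw − f σv). Then p ≠ q and p and q are adjacent extreme points of C ∩ H. -/
/-- Let `C` be convex and `σw, σu, σv` affinely independent extreme points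
of `C` such that the triangle `T = convexHull ℝ {σw, σu, σv}` is an extreme subset of `C`
and each of the segments `[σw, σu]`, `[σw, σv]`, `[σu, σv]` is an extreme subset of `C`.
Suppose `f σw > b`, `f σu < b`, `f σv < b`.  Let
`p = θ₁ • σw + (1 − θ₁) • σu` with `θ₁ = (b − f σu)/(f σw − f σu)` and
`q = θ₂ • σw + (1 − θ₂) • σv` with `θ₂ = (b − f σv)/(f σw − f σv)`.
Then `p ≠ q` and `p`, `q` are adjacent extreme points of `C ∩ H`,
where `H = {x | f x ≥ b}`. -/
theorem adjacent_new_extremePoints_of_cut_triangle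
    {V : Type*} [AddCommGroup V] [Module ℝ V]
    (f : V →ₗ[ℝ] ℝ) (b : ℝ) (C : Set V) (hC : Convex ℝ C) {σw σu σv : V}
    (hind : AffineIndependent ℝ ![σw, σu, σv])
    (hw : σw ∈ Set.extremePoints ℝ C)
    (hu : σu ∈ Set.extremePoints ℝ C)
    (hv : σv ∈ Set.extremePoints ℝ C)
    (hT : IsExtreme ℝ C (convexHull ℝ {σw, σu, σv}))
    (hwu : IsExtreme ℝ C (segment ℝ σw σu))
    (hwv : IsExtreme ℝ C (segment ℝ σw σv))
    (huv : IsExtreme ℝ C (segment ℝ σu σv))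
    (hfw : b < f σw) (hfu : f σu < b) (hfv : f σv < b)
    (θ₁ θ₂ : ℝ) (hθ₁ : θ₁ = (b - f σu) / (f σw - f σu))
    (hθ₂ : θ₂ = (b - f σv) / (f σw - f σv))
    (p q : V) (hp : p = θ₁ • σw + (1 - θ₁) • σu)
    (hq : q = θ₂ • σw + (1 - θ₂) • σv) :
    p ≠ q ∧
    p ∈ Set.extremePoints ℝ (C ∩ {x | b ≤ f x}) ∧
    q ∈ Set.extremePoints ℝ (C ∩ {x | b ≤ f x}) ∧
    IsExtreme ℝ (C ∩ {x | b ≤ f x}) (segment ℝ p q) := by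
  have hD₁ : (0:ℝ) < f σw - f σu := by linarith
  have hD₂ : (0:ℝ) < f σw - f σv := by linarith
  have hWpos : (0:ℝ) < f σw - b := by linarith
  have hθ₁0 : 0 < θ₁ := by rw [hθ₁]; exact div_pos (by linarith) hD₁
  have hθ₁1 : θ₁ < 1 := by rw [hθ₁, div_lt_one hD₁]; linarith
  have hθ₂0 : 0 < θ₂ := by rw [hθ₂]; exact div_pos (by linarith) hD₂
  have hθ₂1 : θ₂ < 1 := by rw [hθ₂, div_lt_one hD₂]; linarith
  have hθ₁D : θ₁ * (f σw - f σu) = b - f σu := by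
    rw [hθ₁]; exact div_mul_cancel₀ _ hD₁.ne'
  have hθ₂D : θ₂ * (f σw - f σv) = b - f σv := by
    rw [hθ₂]; exact div_mul_cancel₀ _ hD₂.ne'
  have hfp : f p = b := by
    rw [hp]; simp only [map_add, map_smul, smul_eq_mul]
    linear_combination hθ₁D
  have hfq : f q = b := by
    rw [hq]; simp only [map_add, map_smul, smul_eq_mul]
    linear_combination hθ₂D
  have hpseg : p ∈ segment ℝ σw σu :=
    ⟨θ₁, 1 - θ₁, hθ₁0.le, by linarith, by ring, hp.symm⟩
  have hqseg : q ∈ segment ℝ σw σv :=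
    ⟨θ₂, 1 - θ₂, hθ₂0.le, by linarith, by ring, hq.symm⟩
  have hpC : p ∈ C := hwu.1 hpseg
  have hqC : q ∈ C := hwv.1 hqseg
  have hwT : σw ∈ convexHull ℝ ({σw, σu, σv} : Set V) :=
    subset_convexHull ℝ _ (by simp)
  have huT : σu ∈ convexHull ℝ ({σw, σu, σv} : Set V) :=
    subset_convexHull ℝ _ (by simp)
  have hvT : σv ∈ convexHull ℝ ({σw, σu, σv} : Set V) :=
    subset_convexHull ℝ _ (by simp)
  have hconvT : Convex ℝ (convexHull ℝ ({σw, σu, σv} : Set V)) := convex_convexHull ℝ _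
  have hpT : p ∈ convexHull ℝ ({σw, σu, σv} : Set V) :=
    hconvT.segment_subset hwT huT hpseg
  have hqT : q ∈ convexHull ℝ ({σw, σu, σv} : Set V) :=
    hconvT.segment_subset hwT hvT hqseg
  -- key: triangle ∩ {f = b} ⊆ [p,q]
  have key : ∀ x ∈ convexHull ℝ ({σw, σu, σv} : Set V), f x = b → x ∈ segment ℝ p q := by
    intro x hx hfx
    rw [show ({σw, σu, σv} : Set V) = insert σw {σu, σv} from rfl,
      convexHull_insert ⟨σu, by simp⟩, mem_convexJoin] at hx
    obtain ⟨w', hw', z, hz, hxz⟩ := hx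
    rw [Set.mem_singleton_iff] at hw'
    rw [hw'] at hxz
    rw [convexHull_pair] at hz
    obtain ⟨r, r', hr, hr', hrr, rfl⟩ := hz
    obtain ⟨s, s', hs, hs', hss, rfl⟩ := hxz
    simp only [map_add, map_smul, smul_eq_mul] at hfx
    -- hfx : s * f σw + s' * (r * f σu + r' * f σv) = b
    have hWeq : (s' * r) * (f σw - f σu) + (s' * r') * (f σw - f σv) = f σw - b := by
      linear_combination (f σw) * hss + (f σw * s') * hrr - hfx
    have hβ0 : 0 ≤ s' * r := mul_nonneg hs' hr
    have hγ0 : 0 ≤ s' * r' := mul_nonneg hs' hr'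
    set t : ℝ := (s' * r) * (f σw - f σu) / (f σw - b) with ht
    have h1t : 1 - t = (s' * r') * (f σw - f σv) / (f σw - b) := by
      rw [ht]
      field_simp
      linear_combination -hWeq
    have c₂ : t * (1 - θ₁) = s' * r := by
      rw [ht, hθ₁]
      field_simp
      ring
    have c₃ : (1 - t) * (1 - θ₂) = s' * r' := by
      rw [h1t, hθ₂]
      field_simp
      ring
    have hsum1 : s + s' * r + s' * r' = 1 := by linear_combination hss + s' * hrr
    have c₁ : t * θ₁ + (1 - t) * θ₂ = s := by
      linear_combination (-1 : ℝ) * c₂ - c₃ - hsum1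
    refine ⟨t, 1 - t, ?_, ?_, by ring, ?_⟩
    · rw [ht]; positivity
    · rw [h1t]; positivity
    · rw [hp, hq]
      match_scalars
      · linear_combination c₁
      · linear_combination c₂
      · linear_combination c₃
  have hsplit : ∀ x y : V, b ≤ f x → b ≤ f y → ∀ z ∈ openSegment ℝ x y, f z = b →
      f x = b ∧ f y = b := by
    rintro x y hx hy z ⟨a, a', ha, ha', haa, rfl⟩ hz
    simp only [map_add, map_smul, smul_eq_mul] at hz
    have h0 : a * (f x - b) + a' * (f y - b) = 0 := by linear_combination hz - b * haa
    have h1 : 0 ≤ a * (f x - b) := mul_nonneg ha.le (by linarith)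
    have h2 : 0 ≤ a' * (f y - b) := mul_nonneg ha'.le (by linarith)
    have hx0 : a * (f x - b) = 0 := by linarith
    have hy0 : a' * (f y - b) = 0 := by linarith
    have e1 := (mul_eq_zero.1 hx0).resolve_left ha.ne'
    have e2 := (mul_eq_zero.1 hy0).resolve_left ha'.ne'
    constructor <;> linarith
  have uniq₁ : ∀ x ∈ segment ℝ σw σu, f x = b → x = p := by
    rintro x ⟨c, c', hc, hc', hcc, rfl⟩ hfx
    simp only [map_add, map_smul, smul_eq_mul] at hfx
    have hcθ : c = θ₁ := by
      rw [hθ₁, eq_div_iff hD₁.ne']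
      linear_combination hfx - f σu * hcc
    have hc'θ : c' = 1 - θ₁ := by rw [← hcθ]; linarith
    rw [hp, hcθ, hc'θ]
  have uniq₂ : ∀ x ∈ segment ℝ σw σv, f x = b → x = q := by
    rintro x ⟨c, c', hc, hc', hcc, rfl⟩ hfx
    simp only [map_add, map_smul, smul_eq_mul] at hfx
    have hcθ : c = θ₂ := by
      rw [hθ₂, eq_div_iff hD₂.ne']
      linear_combination hfx - f σv * hcc
    have hc'θ : c' = 1 - θ₂ := by rw [← hcθ]; linarith
    rw [hq, hcθ, hc'θ]
  refine ⟨?_, ?_, ?_, ?_⟩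
  · -- p ≠ q
    intro hpq
    have hsum : Finset.univ.sum ![θ₁ - θ₂, 1 - θ₁, θ₂ - 1] = 0 := by
      simp [Fin.sum_univ_three]
    have hvec : ∑ e ∈ Finset.univ, (![θ₁ - θ₂, 1 - θ₁, θ₂ - 1] : Fin 3 → ℝ) e • (![σw, σu, σv]) e = 0 := by
      simp only [Fin.sum_univ_three, Matrix.cons_val_zero, Matrix.cons_val_one, Matrix.head_cons,
        Matrix.cons_val_two, Matrix.tail_cons]
      have h : θ₁ • σw + (1 - θ₁) • σu = θ₂ • σw + (1 - θ₂) • σv := by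
        rw [← hp, ← hq, hpq]
      linear_combination (norm := module) h
    have := affineIndependent_iff.1 hind Finset.univ _ hsum hvec 1 (Finset.mem_univ _)
    simp at this
    linarith
  · -- p extreme point
    rw [mem_extremePoints]
    refine ⟨⟨hpC, hfp.ge⟩, ?_⟩
    rintro x ⟨hxC, hxH⟩ y ⟨hyC, hyH⟩ hpxy
    obtain ⟨hxb, hyb⟩ := hsplit x y hxH hyH p hpxy hfp
    obtain ⟨hxs, hys⟩ : x ∈ segment ℝ σw σu ∧ y ∈ segment ℝ σw σu :=
      ⟨hwu.2 hxC hyC hpseg hpxy, hwu.right_mem_of_mem_openSegment hxC hyC hpseg hpxy⟩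
    exact ⟨uniq₁ x hxs hxb, uniq₁ y hys hyb⟩
  · rw [mem_extremePoints]
    refine ⟨⟨hqC, hfq.ge⟩, ?_⟩
    rintro x ⟨hxC, hxH⟩ y ⟨hyC, hyH⟩ hqxy
    obtain ⟨hxb, hyb⟩ := hsplit x y hxH hyH q hqxy hfq
    obtain ⟨hxs, hys⟩ : x ∈ segment ℝ σw σv ∧ y ∈ segment ℝ σw σv :=
      ⟨hwv.2 hxC hyC hqseg hqxy, hwv.right_mem_of_mem_openSegment hxC hyC hqseg hqxy⟩
    exact ⟨uniq₂ x hxs hxb, uniq₂ y hys hyb⟩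
  · constructor
    · intro z hz
      have hzT : z ∈ convexHull ℝ ({σw, σu, σv} : Set V) :=
        hconvT.segment_subset hpT hqT hz
      refine ⟨hT.1 hzT, ?_⟩
      obtain ⟨a, a', ha, ha', haa, rfl⟩ := hz
      show b ≤ f _
      simp only [map_add, map_smul, smul_eq_mul, hfp, hfq]
      have : a * b + a' * b = b := by linear_combination b * haa
      linarith
    · rintro x₁ ⟨hx₁C, hx₁H⟩ x₂ ⟨hx₂C, hx₂H⟩ z hzseg hzopen
      have hzT : z ∈ convexHull ℝ ({σw, σu, σv} : Set V) :=
        hconvT.segment_subset hpT hqT hzseg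
      have hfz : f z = b := by
        obtain ⟨a, a', ha, ha', haa, rfl⟩ := hzseg
        simp only [map_add, map_smul, smul_eq_mul, hfp, hfq]
        linear_combination b * haa
      obtain ⟨hx₁b, hx₂b⟩ := hsplit x₁ x₂ hx₁H hx₂H z hzopen hfz
      have hx₁T := hT.2 hx₁C hx₂C hzT hzopen
      exact key x₁ hx₁T hx₁b
end

section
/- Let S ⊆ (Fin p → ℝ) be a finite nonempty set and C = convexHull ℝ S. Then the minimax regret over C can be computed using only the points of S: MMR(C) = min over bases B of M of (max_{s ∈ S} Regret(B, s)). -/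
/-- The weight `w(λ, B) = ∑_{e ∈ B} ∑_j Y e j * λ j`. -/
noncomputable def matroidWeight {E : Type*} [Fintype E] {p : ℕ}
    (Y : E → Fin p → ℝ) (lam : Fin p → ℝ) (B : Set E) : ℝ :=
  ∑ e ∈ B.toFinite.toFinset, ∑ j, Y e j * lam j

/-- `z*(λ)`: the minimum weight of a base of `M` at parameter `λ`. -/
noncomputable def zStar {E : Type*} [Fintype E] {p : ℕ}
    (M : Matroid E) (Y : E → Fin p → ℝ) (lam : Fin p → ℝ) : ℝ :=
  sInf {r : ℝ | ∃ B, M.IsBase B ∧ r = matroidWeight Y lam B}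

/-- `Regret(B, λ) = w(λ, B) − z*(λ)`. -/
noncomputable def regret {E : Type*} [Fintype E] {p : ℕ}
    (M : Matroid E) (Y : E → Fin p → ℝ) (B : Set E) (lam : Fin p → ℝ) : ℝ :=
  matroidWeight Y lam B - zStar M Y lam

/-- `MMR(C)`: the minimum over bases `B` of `M` of `sup_{λ ∈ C} Regret(B, λ)`. -/
noncomputable def MMR {E : Type*} [Fintype E] {p : ℕ}
    (M : Matroid E) (Y : E → Fin p → ℝ) (C : Set (Fin p → ℝ)) : ℝ :=
  sInf {r : ℝ | ∃ B, M.IsBase B ∧ r = sSup (regret M Y B '' C)}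

lemma mw_comb {E : Type*} [Fintype E] {p : ℕ} (Y : E → Fin p → ℝ) (B : Set E)
    (a b : ℝ) (x y : Fin p → ℝ) :
    matroidWeight Y (a • x + b • y) B
      = a * matroidWeight Y x B + b * matroidWeight Y y B := by
  simp only [matroidWeight, Finset.mul_sum, ← Finset.sum_add_distrib]
  refine Finset.sum_congr rfl fun e _ => ?_
  refine Finset.sum_congr rfl fun j _ => ?_
  simp only [Pi.add_apply, Pi.smul_apply, smul_eq_mul]
  ring

lemma zset_fin {E : Type*} [Fintype E] {p : ℕ} (M : Matroid E)
    (Y : E → Fin p → ℝ) (lam : Fin p → ℝ) :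
    {r : ℝ | ∃ B, M.IsBase B ∧ r = matroidWeight Y lam B}.Finite := by
  have : {r : ℝ | ∃ B, M.IsBase B ∧ r = matroidWeight Y lam B}
      = (fun B => matroidWeight Y lam B) '' {B | M.IsBase B} := by
    ext r; simp [eq_comm]
  rw [this]
  exact (Set.toFinite _).image _

lemma zset_ne {E : Type*} [Fintype E] {p : ℕ} (M : Matroid E)
    (Y : E → Fin p → ℝ) (lam : Fin p → ℝ) :
    {r : ℝ | ∃ B, M.IsBase B ∧ r = matroidWeight Y lam B}.Nonempty := by
  obtain ⟨B, hB⟩ := M.exists_isBase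
  exact ⟨_, B, hB, rfl⟩

lemma zStar_le {E : Type*} [Fintype E] {p : ℕ} (M : Matroid E)
    (Y : E → Fin p → ℝ) (lam : Fin p → ℝ) {B : Set E} (hB : M.IsBase B) :
    zStar M Y lam ≤ matroidWeight Y lam B :=
  csInf_le (zset_fin M Y lam).bddBelow ⟨B, hB, rfl⟩

lemma zStar_exists {E : Type*} [Fintype E] {p : ℕ} (M : Matroid E)
    (Y : E → Fin p → ℝ) (lam : Fin p → ℝ) :
    ∃ B, M.IsBase B ∧ zStar M Y lam = matroidWeight Y lam B :=
  (zset_ne M Y lam).csInf_mem (zset_fin M Y lam)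

lemma regret_convexOn {E : Type*} [Fintype E] {p : ℕ} (M : Matroid E)
    (Y : E → Fin p → ℝ) (B : Set E) :
    ConvexOn ℝ Set.univ (regret M Y B) := by
  refine ⟨convex_univ, fun x _ y _ a b ha hb hab => ?_⟩
  simp only [smul_eq_mul, regret, mw_comb]
  have h1 : a * zStar M Y x + b * zStar M Y y ≤ zStar M Y (a • x + b • y) := by
    obtain ⟨B0, hB0, hz⟩ := zStar_exists M Y (a • x + b • y)
    rw [hz, mw_comb]
    have hx := zStar_le M Y x hB0
    have hy := zStar_le M Y y hB0
    nlinarith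
  linarith

theorem mmr_key
    {E : Type*} [Fintype E] {p : ℕ}
    (M : Matroid E) (Y : E → Fin p → ℝ)
    (S : Set (Fin p → ℝ)) (hS : S.Finite) (hSne : S.Nonempty)
    (B : Set E) :
    sSup (regret M Y B '' (convexHull ℝ S)) = sSup (regret M Y B '' S) := by
  have hconv : ConvexOn ℝ (convexHull ℝ S) (regret M Y B) :=
    (regret_convexOn M Y B).subset (Set.subset_univ _) (convex_convexHull ℝ S)
  have hSfin : (regret M Y B '' S).Finite := hS.image _
  have hSne' : (regret M Y B '' S).Nonempty := hSne.image _
  have hbd : ∀ r ∈ regret M Y B '' (convexHull ℝ S), r ≤ sSup (regret M Y B '' S) := by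
    rintro r ⟨x, hx, rfl⟩
    obtain ⟨s, hs, hle⟩ := hconv.exists_ge_of_mem_convexHull (subset_convexHull ℝ S) hx
    exact hle.trans (le_csSup hSfin.bddAbove ⟨s, hs, rfl⟩)
  refine le_antisymm ?_ ?_
  · exact csSup_le ((hSne.mono (subset_convexHull ℝ S)).image _) hbd
  · refine csSup_le hSne' ?_
    rintro r ⟨s, hs, rfl⟩
    exact le_csSup ⟨_, hbd⟩ ⟨s, subset_convexHull ℝ S hs, rfl⟩

/-- Let `S` be a finite nonempty set and `C = convexHull ℝ S`.  Then the
minimax regret over `C` can be computed using only the points of `S`: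
`MMR(C) = min_{B base of M} (max_{s ∈ S} Regret(B, s))`. -/
theorem mmr_eq_mmr_on_generators
    {E : Type*} [Fintype E] {p : ℕ} (hp : 0 < p)
    (M : Matroid E) (hME : M.E = Set.univ) (Y : E → Fin p → ℝ)
    (S : Set (Fin p → ℝ)) (hS : S.Finite) (hSne : S.Nonempty)
    (C : Set (Fin p → ℝ)) (hC : C = convexHull ℝ S) :
    MMR M Y C = sInf {r : ℝ | ∃ B, M.IsBase B ∧ r = sSup (regret M Y B '' S)} := by
  unfold MMR
  congr 1
  ext r
  simp only [Set.mem_setOf_eq]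
  constructor
  · rintro ⟨B, hB, rfl⟩
    exact ⟨B, hB, by rw [hC, mmr_key M Y S hS hSne B]⟩
  · rintro ⟨B, hB, rfl⟩
    exact ⟨B, hB, by rw [hC, mmr_key M Y S hS hSne B]⟩
end

section
/- Let M be a matroid on a finite type E and let B and B' be bases of M. Then there exists a sequence of bases B₀ = B, B₁, …, B_k = B' of M with k = |B \ B'| such that for each i < k there exist elements e ∈ B_i \ B' and f ∈ B' \ B_i with B_{i+1} = (B_i \ {e}) ∪ {f}; that is, B can be transformed into B' by exactly |B \ B'| single-element exchanges, each intermediate set being a base. -/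
private theorem base_exchange_sequence_aux
    {E : Type*} [Fintype E] (M : Matroid E) (B' : Set E) (hB' : M.IsBase B') :
    ∀ n (B : Set E), M.IsBase B → (B \ B').ncard = n →
    ∃ seq : ℕ → Set E,
      seq 0 = B ∧ seq n = B' ∧
      (∀ i ≤ n, M.IsBase (seq i)) ∧
      (∀ i < n, ∃ e ∈ seq i \ B', ∃ f ∈ B' \ seq i,
        seq (i + 1) = (seq i \ {e}) ∪ {f}) := by
  intro n
  induction n with
  | zero =>
    intro B hB hcard
    have hsub : B ⊆ B' := by
      rw [Set.ncard_eq_zero (Set.toFinite _), Set.diff_eq_empty] at hcard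
      exact hcard
    have hBB' : B = B' := hB.eq_of_subset_isBase hB' hsub
    exact ⟨fun _ => B, rfl, hBB', fun i _ => hB, fun i hi => by omega⟩
  | succ n ih =>
    intro B hB hcard
    have hne : (B \ B').Nonempty := by
      rw [← Set.ncard_pos (Set.toFinite _)] at *
      omega
    obtain ⟨e, he⟩ := hne
    obtain ⟨f, hf, hB1⟩ := hB.exchange hB' he
    set B1 := insert f (B \ {e}) with hB1def
    have hdiff : B1 \ B' = (B \ B') \ {e} := by
      ext x
      simp only [hB1def, Set.mem_diff, Set.mem_insert_iff, Set.mem_singleton_iff]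
      constructor
      · rintro ⟨hx1 | ⟨hx2, hx3⟩, hx4⟩
        · exact absurd (hx1 ▸ hf.1) hx4
        · exact ⟨⟨hx2, hx4⟩, hx3⟩
      · rintro ⟨⟨hx1, hx2⟩, hx3⟩
        exact ⟨Or.inr ⟨hx1, hx3⟩, hx2⟩
    have hcard1 : (B1 \ B').ncard = n := by
      rw [hdiff, Set.ncard_diff_singleton_of_mem he, hcard]
      omega
    obtain ⟨seq', h0, hn, hbase, hex⟩ := ih B1 hB1 hcard1
    refine ⟨fun i => if i = 0 then B else seq' (i - 1), by simp, by simp [hn], ?_, ?_⟩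
    · intro i hi
      rcases Nat.eq_zero_or_pos i with h | h
      · simpa [h] using hB
      · have : i ≠ 0 := by omega
        simp only [this, if_false]
        exact hbase (i - 1) (by omega)
    · intro i hi
      rcases Nat.eq_zero_or_pos i with h | h
      · subst h
        refine ⟨e, by simpa using he, f, by simpa using hf, ?_⟩
        simp [h0, hB1def, Set.union_singleton]
      · have h1 : i ≠ 0 := by omega
        have h2 : i + 1 ≠ 0 := by omega
        obtain ⟨e', he', f', hf', heq⟩ := hex (i - 1) (by omega)
        refine ⟨e', ?_, f', ?_, ?_⟩ <;> simp only [h1, h2, if_false]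
        · exact he'
        · exact hf'
        · have : i + 1 - 1 = (i - 1) + 1 := by omega
          rw [this, heq]

/-- Let `M` be a matroid on a finite type `E` and let `B` and `B'` be
bases of `M`.  Then there is a sequence of bases `B₀ = B, B₁, …, B_k = B'` of `M` with
`k = |B \ B'|` such that for each `i < k` there exist elements `e ∈ B_i \ B'` and
`f ∈ B' \ B_i` with `B_{i+1} = (B_i \ {e}) ∪ {f}`; that is, `B` can be transformed into
`B'` by exactly `|B \ B'|` single-element exchanges, each intermediate set being a
base. -/
theorem base_exchange_sequence
    {E : Type*} [Fintype E] (M : Matroid E) (hME : M.E = Set.univ)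
    (B B' : Set E) (hB : M.IsBase B) (hB' : M.IsBase B') :
    ∃ seq : ℕ → Set E,
      seq 0 = B ∧ seq ((B \ B').ncard) = B' ∧
      (∀ i ≤ (B \ B').ncard, M.IsBase (seq i)) ∧
      (∀ i < (B \ B').ncard, ∃ e ∈ seq i \ B', ∃ f ∈ B' \ seq i,
        seq (i + 1) = (seq i \ {e}) ∪ {f}) :=
  base_exchange_sequence_aux M B' hB' _ B hB rfl
end

section
/- Let λ₀, λ₁ ∈ (Fin p → ℝ) and let B be a base of M such that w(λ₀, B) ≤ w(λ₀, B') for every base B' (B is optimal at λ₀), but there exists a base B₁ with w(λ₁, B₁) < w(λ₁, B) (B is not optimal at λ₁). Then there exist t ∈ [0, 1] and a base B'' ≠ B of M such that, at the point μ = (1 − t) • λ₀ + t • λ₁ on the segment joining λ₀ and λ₁, both B and B'' are optimal: w(μ, B) ≤ w(μ, B') and w(μ, B'') ≤ w(μ, B') for every base B' of M. -/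
lemma matroidWeight_combo {E : Type*} [Fintype E] {p : ℕ}
    (Y : E → Fin p → ℝ) (l0 l1 : Fin p → ℝ) (s t : ℝ) (B : Set E) :
    matroidWeight Y (s • l0 + t • l1) B =
      s * matroidWeight Y l0 B + t * matroidWeight Y l1 B := by
  simp only [matroidWeight, Finset.mul_sum, ← Finset.sum_add_distrib]
  refine Finset.sum_congr rfl fun e _ => Finset.sum_congr rfl fun j _ => ?_
  simp [Pi.add_apply, Pi.smul_apply, smul_eq_mul]
  ring

/-- Let `λ₀, λ₁` be parameter vectors and `B` a base of `M` that is
optimal at `λ₀` (i.e. `w(λ₀, B) ≤ w(λ₀, B')` for every base `B'`) but not optimal at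
`λ₁` (there is a base `B₁` with `w(λ₁, B₁) < w(λ₁, B)`).  Then there exist `t ∈ [0, 1]`
and a base `B'' ≠ B` of `M` such that, at the point `μ = (1 − t) • λ₀ + t • λ₁` on the
segment joining `λ₀` and `λ₁`, both `B` and `B''` are optimal:
`w(μ, B) ≤ w(μ, B')` and `w(μ, B'') ≤ w(μ, B')` for every base `B'` of `M`. -/
theorem exists_point_with_two_optimal_bases
    {E : Type*} [Fintype E] {p : ℕ} (hp : 0 < p)
    (M : Matroid E) (hME : M.E = Set.univ) (Y : E → Fin p → ℝ)
    (lam₀ lam₁ : Fin p → ℝ) (B : Set E) (hB : M.IsBase B)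
    (hopt₀ : ∀ B', M.IsBase B' → matroidWeight Y lam₀ B ≤ matroidWeight Y lam₀ B')
    (hnotopt₁ : ∃ B₁, M.IsBase B₁ ∧ matroidWeight Y lam₁ B₁ < matroidWeight Y lam₁ B) :
    ∃ t ∈ Set.Icc (0 : ℝ) 1, ∃ B'' : Set E, M.IsBase B'' ∧ B'' ≠ B ∧
      (∀ B', M.IsBase B' →
        matroidWeight Y ((1 - t) • lam₀ + t • lam₁) B ≤
          matroidWeight Y ((1 - t) • lam₀ + t • lam₁) B') ∧
      (∀ B', M.IsBase B' →
        matroidWeight Y ((1 - t) • lam₀ + t • lam₁) B'' ≤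
          matroidWeight Y ((1 - t) • lam₀ + t • lam₁) B') := by
  classical
  obtain ⟨B₁, hB₁, hlt₁⟩ := hnotopt₁
  set w0 : Set E → ℝ := matroidWeight Y lam₀ with hw0
  set w1 : Set E → ℝ := matroidWeight Y lam₁ with hw1
  have hfin : {C : Set E | M.IsBase C ∧ w1 C < w1 B}.Finite := Set.toFinite _
  set S : Finset (Set E) := hfin.toFinset with hS
  have hmemS : ∀ C, C ∈ S ↔ M.IsBase C ∧ w1 C < w1 B := by
    intro C; simp [hS, hfin.mem_toFinset]
  have hne : S.Nonempty := ⟨B₁, (hmemS B₁).2 ⟨hB₁, hlt₁⟩⟩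
  set g : Set E → ℝ := fun C => (w0 C - w0 B) / ((w0 C - w0 B) + (w1 B - w1 C)) with hg
  obtain ⟨B'', hB''S, hmin⟩ := S.exists_min_image g hne
  obtain ⟨hB''base, hB''lt⟩ := (hmemS B'').1 hB''S
  set t : ℝ := g B'' with ht
  -- basic facts about g on S
  have key : ∀ C ∈ S, 0 ≤ w0 C - w0 B ∧ 0 < w1 B - w1 C ∧
      g C * ((w0 C - w0 B) + (w1 B - w1 C)) = w0 C - w0 B := by
    intro C hC
    obtain ⟨hCb, hClt⟩ := (hmemS C).1 hC
    have ha : 0 ≤ w0 C - w0 B := by linarith [hopt₀ C hCb]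
    have hb : 0 < w1 B - w1 C := by linarith
    refine ⟨ha, hb, ?_⟩
    rw [hg]
    field_simp
  obtain ⟨ha'', hb'', heq''⟩ := key B'' hB''S
  have ht0 : 0 ≤ t := by
    rw [ht, hg]
    positivity
  have ht1 : t ≤ 1 := by
    nlinarith
  -- B is optimal at t
  have hBopt : ∀ C, M.IsBase C →
      (1 - t) * w0 B + t * w1 B ≤ (1 - t) * w0 C + t * w1 C := by
    intro C hCb
    by_cases hCS : C ∈ S
    · obtain ⟨ha, hb, heq⟩ := key C hCS
      have htle : t ≤ g C := hmin C hCS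
      nlinarith
    · have hb : w1 B ≤ w1 C := by
        by_contra h
        exact hCS ((hmemS C).2 ⟨hCb, by linarith⟩)
      have ha : w0 B ≤ w0 C := hopt₀ C hCb
      nlinarith
  have heqBB : (1 - t) * w0 B'' + t * w1 B'' = (1 - t) * w0 B + t * w1 B := by
    nlinarith
  refine ⟨t, ⟨ht0, ht1⟩, B'', hB''base, ?_, ?_, ?_⟩
  · intro h; rw [h] at hB''lt; exact lt_irrefl _ hB''lt
  · intro C hCb
    rw [matroidWeight_combo, matroidWeight_combo]
    exact hBopt C hCb
  · intro C hCb
    rw [matroidWeight_combo, matroidWeight_combo, ← hw0, ← hw1, heqBB]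
    exact hBopt C hCb
end
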